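/- Let a, b, c ∈ ℤ and A = ℤ[X,Y]/(aX² + bXY + cY² − 1). Then A is a smooth ℤ-algebra if and only if b is odd, or a, b, c are all even. -/

import Mathlib

open MvPolynomial

/-- The polynomial `a X² + b XY + c Y² - 1` in `ℤ[X,Y]`. -/
noncomputable abbrev quadPoly (a b c : ℤ) : MvPolynomial (Fin 2) ℤ :=
  C a * X 0 ^ 2 + C b * X 0 * X 1 + C c * X 1 ^ 2 - 1

/-- The ring `A = ℤ[X,Y]/(a X² + b XY + c Y² - 1)`. -/
noncomputable abbrev QuadAlg (a b c : ℤ) :=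
  MvPolynomial (Fin 2) ℤ ⧸ Ideal.span {quadPoly a b c}

/-!
Write `q = aX² + bXY + cY² - 1`. If `q` and its partial derivatives generate the unit ideal,
say `1 = u q + Σ cᵢ ∂ᵢq`, then by Taylor's formula the substitution `Xᵢ ↦ Xᵢ - cᵢ q` sends `q`
into `(q²)`, which gives a section of `ℤ[X,Y]/(q²) → A`. At a common zero of `q`, `∂ₓq`, `∂ᵧq`
Euler's identity forces `2 = 0`, and eliminating `x, y` forces `b² - 4ac = 0`; so the ideal is
the unit ideal when `b` is odd or `a, b, c` are all even.

If `b` is even, then modulo `2` we have `q = (aX + cY + 1)²`. When `a` or `c` is odd there is a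
point of `A` over `𝔽₂[ε]/(ε²)` with `aX + cY + 1 = ε`; any lift of it to `𝔽₂[ε]/(ε³)` still has
`q = ε² ≠ 0`, so `A` is not formally smooth.
-/

namespace MvPolynomial

variable {R σ : Type*} [CommRing R]

theorem aeval_add_sub_sum_pderiv_mem_sq [Fintype σ] {B : Type*} [CommRing B] [Algebra R B]
    {J : Ideal B} (x : σ → B) {ε : σ → B} (hε : ∀ i, ε i ∈ J) (p : MvPolynomial σ R) :
    aeval (x + ε) p - aeval x p - ∑ i, ε i * aeval x (pderiv i p) ∈ J ^ 2 := by
  classical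
  induction p using MvPolynomial.induction_on with
  | C r => simp
  | add p q hp hq =>
    convert add_mem hp hq using 1
    simp only [map_add, mul_add, Finset.sum_add_distrib]
    ring
  | mul_X p j hp =>
    set D := ∑ i, ε i * aeval x (pderiv i p)
    have hD : D ∈ J := Ideal.sum_mem _ fun i _ ↦ J.mul_mem_right _ (hε i)
    have hdiff : aeval (x + ε) p - aeval x p ∈ J := by
      simpa using J.add_mem (Ideal.pow_le_self two_ne_zero hp) hD
    have hsum : ∑ i, ε i * aeval x (pderiv i (p * X j)) = D * x j + ε j * aeval x p := by
      simp [D, pderiv_X, Pi.single_apply, mul_add, Finset.sum_add_distrib, apply_ite (aeval x),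
        mul_left_comm _ (x j), mul_comm _ (x j), Finset.mul_sum, add_comm]
    have key : aeval (x + ε) (p * X j) - aeval x (p * X j)
        - ∑ i, ε i * aeval x (pderiv i (p * X j))
        = (aeval (x + ε) p - aeval x p - D) * x j + (aeval (x + ε) p - aeval x p) * ε j := by
      rw [hsum]
      simp only [map_mul, aeval_X, Pi.add_apply]
      ring
    rw [key]
    refine add_mem (Ideal.mul_mem_right _ _ hp) ?_
    rw [sq]
    exact Ideal.mul_mem_mul hdiff (hε j)

/-- Contains `f` itself, so its zero locus is the singular locus of the hypersurface `f = 0`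
rather than the critical locus of `f`. -/
noncomputable def jacobianIdeal (f : MvPolynomial σ R) : Ideal (MvPolynomial σ R) :=
  Ideal.span (insert f (Set.range fun i ↦ pderiv i f))

theorem aeval_X_sub_mul_mem_span_sq [Fintype σ] {f u : MvPolynomial σ R}
    {c : σ → MvPolynomial σ R} (hone : 1 = u * f + ∑ i, c i * pderiv i f) :
    aeval (fun i ↦ X i - c i * f) f ∈ Ideal.span {f} ^ 2 := by
  set I := Ideal.span {f}
  have hf : f ∈ I := Ideal.mem_span_singleton_self f
  have taylor := aeval_add_sub_sum_pderiv_mem_sq X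
    (fun i ↦ I.neg_mem (I.mul_mem_left (c i) hf)) f
  have hX : X + (fun i ↦ -(c i * f)) = fun i ↦ X i - c i * f := by
    ext1 i
    exact (sub_eq_add_neg _ _).symm
  simp only [hX, aeval_X_left_apply, neg_mul, Finset.sum_neg_distrib, sub_neg_eq_add] at taylor
  have hsum : ∑ i, c i * f * pderiv i f = f * ∑ i, c i * pderiv i f := by
    rw [Finset.mul_sum]
    exact Finset.sum_congr rfl fun _ _ ↦ by ring
  rw [hsum] at taylor
  have hsplit : aeval (fun i ↦ X i - c i * f) f
      = (aeval (fun i ↦ X i - c i * f) f - f + f * ∑ i, c i * pderiv i f) + u * f * f := by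
    linear_combination f * hone
  rw [hsplit]
  refine add_mem taylor ?_
  rw [sq]
  exact Ideal.mul_mem_mul (I.mul_mem_left _ hf) hf

theorem formallySmooth_of_jacobianIdeal_eq_top [Fintype σ] {f : MvPolynomial σ R}
    (h : jacobianIdeal f = ⊤) :
    Algebra.FormallySmooth R (MvPolynomial σ R ⧸ Ideal.span {f}) := by
  set I := Ideal.span {f}
  obtain ⟨u, z, hz, hone⟩ := Ideal.mem_span_insert.1 (h ▸ Submodule.mem_top : 1 ∈ jacobianIdeal f)
  obtain ⟨c, rfl⟩ := Ideal.mem_span_range_iff_exists_fun.1 hz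
  let θ : MvPolynomial σ R →ₐ[R] MvPolynomial σ R := aeval fun i ↦ X i - c i * f
  let proj : MvPolynomial σ R →ₐ[R] MvPolynomial σ R ⧸ I := Ideal.Quotient.mkₐ R I
  have hker : RingHom.ker proj.toRingHom = I := Ideal.Quotient.mkₐ_ker R I
  let π := Ideal.Quotient.mkₐ R (RingHom.ker proj.toRingHom ^ 2)
  have hθI : ∀ q ∈ I, (π.comp θ) q = 0 := by
    intro q hq
    obtain ⟨r, rfl⟩ := Ideal.mem_span_singleton'.1 hq
    rw [AlgHom.comp_apply, Ideal.Quotient.mkₐ_eq_mk, Ideal.Quotient.eq_zero_iff_mem, hker,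
      map_mul]
    exact Ideal.mul_mem_left _ _ (aeval_X_sub_mul_mem_span_sq hone)
  refine Algebra.FormallySmooth.of_split proj (Ideal.Quotient.liftₐ I (π.comp θ) hθI) ?_
  refine Ideal.Quotient.algHom_ext R (MvPolynomial.algHom_ext fun i ↦ ?_)
  have hf : Ideal.Quotient.mk I f = 0 :=
    Ideal.Quotient.eq_zero_iff_mem.2 (Ideal.mem_span_singleton_self f)
  change proj (θ (X i)) = proj (X i)
  simp [θ, proj, hf]

theorem smooth_of_jacobianIdeal_eq_top [Fintype σ] {f : MvPolynomial σ R}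
    (h : jacobianIdeal f = ⊤) : Algebra.Smooth R (MvPolynomial σ R ⧸ Ideal.span {f}) where
  formallySmooth := formallySmooth_of_jacobianIdeal_eq_top h
  finitePresentation := .quotient (Submodule.fg_span_singleton f)

theorem exists_aeval_eq_zero_of_formallySmooth {f : MvPolynomial σ R}
    [Algebra.FormallySmooth R (MvPolynomial σ R ⧸ Ideal.span {f})] {B : Type*} [CommRing B]
    [Algebra R B] {I : Ideal B} (hI : IsNilpotent I) {x : σ → B} (hx : aeval x f ∈ I) :
    ∃ y : σ → B, (∀ i, y i - x i ∈ I) ∧ aeval y f = 0 := by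
  have hxf : ∀ q ∈ Ideal.span {f}, (Ideal.Quotient.mkₐ R I).comp (aeval x) q = 0 := by
    intro q hq
    obtain ⟨r, rfl⟩ := Ideal.mem_span_singleton'.1 hq
    simp [Ideal.Quotient.eq_zero_iff_mem.2 hx]
  obtain ⟨g, hg⟩ := Algebra.FormallySmooth.exists_lift I hI (Ideal.Quotient.liftₐ _ _ hxf)
  have hgx : (Ideal.Quotient.mkₐ R I).comp (g.comp (Ideal.Quotient.mkₐ R _)) =
      (Ideal.Quotient.mkₐ R I).comp (aeval x) := by
    rw [← AlgHom.comp_assoc, hg, Ideal.Quotient.liftₐ_comp]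
  refine ⟨fun i ↦ g (Ideal.Quotient.mk _ (X i)), fun i ↦ ?_, ?_⟩
  · rw [← Ideal.Quotient.eq]
    simpa using congr($hgx (X i))
  · have : aeval (fun i ↦ g (Ideal.Quotient.mk _ (X i))) = g.comp (Ideal.Quotient.mkₐ R _) :=
      algHom_ext fun i ↦ by simp
    rw [this, AlgHom.comp_apply, Ideal.Quotient.mkₐ_eq_mk,
      Ideal.Quotient.eq_zero_iff_mem.2 (Ideal.mem_span_singleton_self f), map_zero]

end MvPolynomial

section
variable {S : Type*} [CommRing S] {a b c : ℤ}

theorem aeval_quadPoly [Algebra ℤ S] (v : Fin 2 → S) :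
    aeval v (quadPoly a b c) = a * v 0 ^ 2 + b * v 0 * v 1 + c * v 1 ^ 2 - 1 := by
  simp

theorem aeval_pderiv_zero_quadPoly [Algebra ℤ S] (v : Fin 2 → S) :
    aeval v (pderiv 0 (quadPoly a b c)) = 2 * a * v 0 + b * v 1 := by
  simp [pderiv_X]
  ring

theorem aeval_pderiv_one_quadPoly [Algebra ℤ S] (v : Fin 2 → S) :
    aeval v (pderiv 1 (quadPoly a b c)) = b * v 0 + 2 * c * v 1 := by
  simp [pderiv_X]
  ring

structure IsQuadSingularPoint (a b c : ℤ) (x y : S) : Prop where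
  eq_one : a * x ^ 2 + b * x * y + c * y ^ 2 = 1
  pderiv_zero_eq : 2 * a * x + b * y = 0
  pderiv_one_eq : b * x + 2 * c * y = 0

namespace IsQuadSingularPoint
variable {x y : S} (h : IsQuadSingularPoint a b c x y)
include h

theorem two_eq_zero : (2 : S) = 0 := by
  linear_combination x * h.pderiv_zero_eq + y * h.pderiv_one_eq - 2 * h.eq_one

/- `b ∂ᵧq - 2c ∂ₓq = (b² - 4ac) x` and `b ∂ₓq - 2a ∂ᵧq = (b² - 4ac) y`, then expand `q = 1`. -/
theorem discr_eq_zero : (b ^ 2 - 4 * a * c : S) = 0 := by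
  linear_combination (-(b ^ 2 - 4 * a * c : S)) * h.eq_one
    + (a * x + b * y) * (b * h.pderiv_one_eq - 2 * c * h.pderiv_zero_eq)
    + c * y * (b * h.pderiv_zero_eq - 2 * a * h.pderiv_one_eq)

theorem one_eq_zero (hbac : Odd b ∨ (Even a ∧ Even b ∧ Even c)) : (1 : S) = 0 := by
  have h2 := h.two_eq_zero
  rcases hbac with ⟨k, rfl⟩ | ⟨⟨a', rfl⟩, ⟨b', rfl⟩, ⟨c', rfl⟩⟩
  · have hdiscr := h.discr_eq_zero
    push_cast at hdiscr
    linear_combination hdiscr - (2 * k ^ 2 + 2 * k - 2 * a * c : S) * h2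
  · have hq := h.eq_one
    push_cast at hq
    linear_combination (a' * x ^ 2 + b' * x * y + c' * y ^ 2 : S) * h2 - hq

end IsQuadSingularPoint
end

theorem jacobianIdeal_quadPoly_eq_top {a b c : ℤ} (hbac : Odd b ∨ (Even a ∧ Even b ∧ Even c)) :
    jacobianIdeal (quadPoly a b c) = ⊤ := by
  set J := jacobianIdeal (quadPoly a b c)
  have hmem : ∀ p ∈ insert (quadPoly a b c) (Set.range fun i ↦ pderiv i (quadPoly a b c)),
      Ideal.Quotient.mkₐ ℤ J p = 0 :=
    fun p hp ↦ Ideal.Quotient.eq_zero_iff_mem.2 (Ideal.subset_span hp)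
  have hq := hmem _ (Set.mem_insert _ _)
  have hx := hmem _ (Set.mem_insert_of_mem _ ⟨0, rfl⟩)
  have hy := hmem _ (Set.mem_insert_of_mem _ ⟨1, rfl⟩)
  rw [aeval_unique (Ideal.Quotient.mkₐ ℤ J)] at hq hx hy
  simp only [aeval_quadPoly, aeval_pderiv_zero_quadPoly, aeval_pderiv_one_quadPoly,
    Function.comp_apply, sub_eq_zero] at hq hx hy
  rw [Ideal.eq_top_iff_one, ← Ideal.Quotient.eq_zero_iff_mem, map_one]
  exact IsQuadSingularPoint.one_eq_zero ⟨hq, hx, hy⟩ hbac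

section CharTwo
variable {B : Type*} [CommRing B] (h2 : (2 : B) = 0)
include h2

theorem intCast_sq_eq_self_of_two_eq_zero (a : ℤ) : (a : B) ^ 2 = a := by
  obtain ⟨k, hk⟩ := Int.even_mul_pred_self a
  have : ((a * (a - 1) : ℤ) : B) = 2 * k := by rw [hk]; push_cast; ring
  push_cast at this
  linear_combination this + k * h2

theorem intCast_eq_one_of_two_eq_zero {a : ℤ} (ha : Odd a) : (a : B) = 1 := by
  obtain ⟨k, rfl⟩ := ha
  push_cast
  linear_combination k * h2

theorem quadratic_eq_sq_of_two_eq_zero {a b c : ℤ} (hb : Even b) (x y : B) :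
    a * x ^ 2 + b * x * y + c * y ^ 2 - 1 = (a * x + c * y + 1) ^ 2 := by
  obtain ⟨k, rfl⟩ := hb
  push_cast
  linear_combination (-x ^ 2) * intCast_sq_eq_self_of_two_eq_zero h2 a
    - y ^ 2 * intCast_sq_eq_self_of_two_eq_zero h2 c
    + (k * x * y - 1 - a * c * x * y - a * x - c * y) * h2

end CharTwo

theorem not_formallySmooth_quadAlg_of_two_eq_zero {B : Type*} [CommRing B] (h2 : (2 : B) = 0)
    {ε : B} (hε2 : ε ^ 2 ≠ 0) (hε3 : ε ^ 3 = 0) {a b c : ℤ} (hb : Even b)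
    (hac : ¬(Even a ∧ Even c)) : ¬ Algebra.FormallySmooth ℤ (QuadAlg a b c) := by
  intro _
  let I : Ideal B := Ideal.span {ε ^ 2}
  have hI : IsNilpotent I := ⟨2, by
    rw [Ideal.span_singleton_pow, ← pow_mul, show ε ^ (2 * 2) = ε * ε ^ 3 by ring, hε3, mul_zero,
      Ideal.zero_eq_bot, Ideal.span_singleton_eq_bot]⟩
  obtain ⟨x, y, hxy⟩ : ∃ x y : B, a * x + c * y + 1 = ε := by
    rcases not_and_or.1 hac with ha | hc
    · refine ⟨1 + ε, 0, ?_⟩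
      rw [intCast_eq_one_of_two_eq_zero h2 (Int.not_even_iff_odd.1 ha)]
      linear_combination h2
    · refine ⟨0, 1 + ε, ?_⟩
      rw [intCast_eq_one_of_two_eq_zero h2 (Int.not_even_iff_odd.1 hc)]
      linear_combination h2
  have hq : aeval ![x, y] (quadPoly a b c) ∈ I := by
    rw [aeval_quadPoly]
    simp only [Matrix.cons_val_zero, Matrix.cons_val_one]
    rw [quadratic_eq_sq_of_two_eq_zero h2 hb, hxy]
    exact Ideal.mem_span_singleton_self _
  obtain ⟨z, hzI, hz⟩ := exists_aeval_eq_zero_of_formallySmooth hI hq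
  obtain ⟨u, hu⟩ := Ideal.mem_span_singleton'.1 (hzI 0)
  obtain ⟨v, hv⟩ := Ideal.mem_span_singleton'.1 (hzI 1)
  rw [aeval_quadPoly, quadratic_eq_sq_of_two_eq_zero h2 hb] at hz
  simp only [Matrix.cons_val_zero, Matrix.cons_val_one] at hu hv
  have hlift : a * z 0 + c * z 1 + 1 = ε + ε ^ 2 * (a * u + c * v) := by
    linear_combination hxy - a * hu - c * hv
  rw [hlift] at hz
  apply hε2
  linear_combination hz - (2 * (a * u + c * v) + ε * (a * u + c * v) ^ 2) * hε3

theorem not_formallySmooth_quadAlg {a b c : ℤ} (hb : Even b) (hac : ¬(Even a ∧ Even c)) :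
    ¬ Algebra.FormallySmooth ℤ (QuadAlg a b c) := by
  let B := Polynomial (ZMod 2) ⧸ Ideal.span {(Polynomial.X ^ 3 : Polynomial (ZMod 2))}
  have h2 : (2 : B) = 0 := by
    rw [← map_ofNat (algebraMap (ZMod 2) B) 2, show (2 : ZMod 2) = 0 from rfl, map_zero]
  have hε2 : (Ideal.Quotient.mk _ Polynomial.X : B) ^ 2 ≠ 0 := by
    rw [← map_pow, Ne, Ideal.Quotient.eq_zero_iff_mem, Ideal.mem_span_singleton,
      pow_dvd_pow_iff Polynomial.X_ne_zero Polynomial.not_isUnit_X]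
    norm_num
  have hε3 : (Ideal.Quotient.mk _ Polynomial.X : B) ^ 3 = 0 := by
    rw [← map_pow, Ideal.Quotient.eq_zero_iff_mem]
    exact Ideal.mem_span_singleton_self _
  exact not_formallySmooth_quadAlg_of_two_eq_zero h2 hε2 hε3 hb hac

theorem smooth_iff_odd_or_all_even (a b c : ℤ) :
    Algebra.Smooth ℤ (QuadAlg a b c) ↔ Odd b ∨ (Even a ∧ Even b ∧ Even c) := by
  refine ⟨fun h ↦ ?_, fun h ↦ smooth_of_jacobianIdeal_eq_top (jacobianIdeal_quadPoly_eq_top h)⟩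
  by_contra hne
  rw [not_or, Int.not_odd_iff_even] at hne
  obtain ⟨hb, hne⟩ := hne
  exact not_formallySmooth_quadAlg hb (fun ⟨ha, hc⟩ ↦ hne ⟨ha, hb, hc⟩) h.formallySmooth
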